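/- Let Y be a squared-Bessel process of dimension δ > 0 started at y ∈ [0,∞), i.e., a solution of dY_t = δ dt + 2√(Y_t) dW_t with Y_0 = y. Then there exists ε > 0 (depending only on δ) such that P_y(τ_{y/2} ≥ ε y) ≥ 1/2 for all y ≥ 0, where τ_{y/2} = inf{t ≥ 0 : Y_t = y/2}. -/

import Mathlib

open MeasureTheory Filter Set

/-- `Y` is a squared-Bessel process of dimension `δ` started at `y`, characterized via the
martingale problem: `Y_t - y - δ t` is a martingale with quadratic variation `4∫_0^t Y_s ds`. -/
structure IsBESQ {Ω : Type*} {m : MeasurableSpace Ω} (μ : Measure Ω)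
    (ℱ : Filtration ℝ m) (δ y : ℝ) (Y : ℝ → Ω → ℝ) : Prop where
  nonneg : ∀ t ω, 0 ≤ Y t ω
  cont : ∀ ω, Continuous fun t => Y t ω
  init : ∀ ω, Y 0 ω = y
  adapted : Adapted ℱ Y
  integrable_sq : ∀ t : ℝ, Integrable (fun ω => (Y t ω) ^ 2) μ
  mart : ∀ s t : ℝ, 0 ≤ s → s ≤ t →
    (μ[(fun ω => Y t ω - y - δ * t) | ℱ s]) =ᵐ[μ] fun ω => Y s ω - y - δ * s
  qv : ∀ s t : ℝ, 0 ≤ s → s ≤ t →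
    (μ[(fun ω => (Y t ω - y - δ * t) ^ 2 - 4 * ∫ u in (0:ℝ)..t, Y u ω) | ℱ s])
      =ᵐ[μ] fun ω => (Y s ω - y - δ * s) ^ 2 - 4 * ∫ u in (0:ℝ)..s, Y u ω

section Aux

variable {Ω : Type} {m : MeasurableSpace Ω} {μ : Measure Ω} [IsProbabilityMeasure μ]
  {ℱ : Filtration ℝ m} {δ y : ℝ} {Y : ℝ → Ω → ℝ}

open Finset in
/-- Doob's maximal inequality for finitely many times of a continuous-time martingale. -/
lemma doob_finset {M : ℝ → Ω → ℝ}
    (hadapt : ∀ t : ℝ, StronglyMeasurable[ℱ t] (M t))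
    (hmart : ∀ s t : ℝ, 0 ≤ s → s ≤ t → (μ[M t | ℱ s]) =ᵐ[μ] M s)
    {T : ℝ} (hT : 0 ≤ T) (hintT : Integrable (M T) μ)
    (s : Finset ℝ) (hs : ∀ t ∈ s, t ∈ Set.Icc 0 T) (c : NNReal) :
    (c : ENNReal) * μ {ω | ∃ t ∈ s, (c : ℝ) ≤ |M t ω|} ≤
      ENNReal.ofReal (∫ ω, |M T ω| ∂μ) := by
  classical
  set time : ℕ → ℝ := fun i => if h : i < s.card then (s.orderIsoOfFin rfl ⟨i, h⟩ : ℝ) else T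
    with htime
  have htime_mem : ∀ i, time i ∈ Set.Icc 0 T := by
    intro i
    by_cases h : i < s.card
    · simp only [time, dif_pos h]
      exact hs _ (s.orderIsoOfFin rfl ⟨i, h⟩).2
    · simp only [time, dif_neg h]
      exact ⟨hT, le_rfl⟩
  have htime_mono : Monotone time := by
    intro i j hij
    by_cases hj : j < s.card
    · have hi : i < s.card := lt_of_le_of_lt hij hj
      simp only [time, dif_pos hi, dif_pos hj]
      exact Subtype.coe_le_coe.2 ((s.orderIsoOfFin rfl).monotone (Fin.mk_le_mk.2 hij))
    · by_cases hi : i < s.card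
      · simp only [time, dif_pos hi, dif_neg hj]
        exact (hs _ (s.orderIsoOfFin rfl ⟨i, hi⟩).2).2
      · simp [time, dif_neg hi, dif_neg hj]
  set 𝒢 : Filtration ℕ m :=
    { seq := fun i => ℱ (time i)
      mono' := fun i j hij => ℱ.mono (htime_mono hij)
      le' := fun i => ℱ.le _ } with h𝒢
  set g : ℕ → Ω → ℝ := fun i => M (time i) with hg
  have hgmart : Martingale g 𝒢 μ :=
    ⟨fun i => hadapt (time i), fun i j hij => hmart _ _ (htime_mem i).1 (htime_mono hij)⟩
  have habs : (fun i ω => |g i ω|) = g ⊔ (-g) := by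
    funext i ω
    simp [abs_eq_max_neg]
  have hsub : Submartingale (fun i ω => |g i ω|) 𝒢 μ := by
    rw [habs]
    exact hgmart.submartingale.sup hgmart.neg.submartingale
  have hnonneg : (0 : ℕ → Ω → ℝ) ≤ fun i ω => |g i ω| :=
    fun i ω => abs_nonneg _
  have hmax := maximal_ineq hsub hnonneg (ε := c) s.card
  have hlastT : time s.card = T := by simp [time]
  have hincl : {ω | ∃ t ∈ s, (c : ℝ) ≤ |M t ω|} ⊆
      {ω | (c : ℝ) ≤ (range (s.card + 1)).sup' nonempty_range_add_one fun k => |g k ω|} := by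
    rintro ω ⟨t, hts, hct⟩
    obtain ⟨i, hi⟩ := (s.orderIsoOfFin rfl).surjective ⟨t, hts⟩
    have hgit : g i.1 ω = M t ω := by
      have : time i.1 = t := by
        simp only [time, dif_pos i.2]
        rw [Fin.eta, hi]
      show M (time i.1) ω = M t ω
      rw [this]
    refine le_trans ?_ (Finset.le_sup' (fun k => |g k ω|)
      (Finset.mem_range.2 (Nat.lt_succ_of_lt i.2)))
    rw [hgit]; exact hct
  calc (c : ENNReal) * μ {ω | ∃ t ∈ s, (c : ℝ) ≤ |M t ω|}
      ≤ (c : ENNReal) * μ {ω | (c : ℝ) ≤ (range (s.card + 1)).sup' nonempty_range_add_one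
          fun k => |g k ω|} := by
        exact mul_le_mul_right (measure_mono hincl) _
    _ ≤ ENNReal.ofReal (∫ ω in {ω | (c : ℝ) ≤ (range (s.card + 1)).sup' nonempty_range_add_one
          fun k => |g k ω|}, |g s.card ω| ∂μ) := by
        simpa [ENNReal.smul_def] using hmax
    _ ≤ ENNReal.ofReal (∫ ω, |M T ω| ∂μ) := by
        apply ENNReal.ofReal_le_ofReal
        simp only [hg]
        rw [hlastT]
        exact setIntegral_le_integral hintT.abs (Eventually.of_forall fun ω => abs_nonneg _)

lemma besq_integrable_Y (hY : IsBESQ μ ℱ δ y Y) (t : ℝ) : Integrable (Y t) μ := by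
  refine Integrable.mono' ((hY.integrable_sq t).add (integrable_const 1))
    (((hY.adapted t).mono (ℱ.le t) le_rfl).aestronglyMeasurable) (Eventually.of_forall fun ω => ?_)
  simp only [Pi.add_apply]
  rw [Real.norm_eq_abs, abs_of_nonneg (hY.nonneg t ω)]
  nlinarith [sq_nonneg (Y t ω - 1)]

lemma besq_integrable_M (hY : IsBESQ μ ℱ δ y Y) (t : ℝ) :
    Integrable (fun ω => Y t ω - y - δ * t) μ :=
  ((besq_integrable_Y hY t).sub (integrable_const (y + δ * t))).congr
    (Eventually.of_forall fun ω => by show Y t ω - (y + δ * t) = _; ring)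

lemma besq_integrable_M_sq (hY : IsBESQ μ ℱ δ y Y) (t : ℝ) :
    Integrable (fun ω => (Y t ω - y - δ * t) ^ 2) μ := by
  refine (((hY.integrable_sq t).sub ((besq_integrable_Y hY t).const_mul (2 * (y + δ * t)))).add
    (integrable_const ((y + δ * t) ^ 2))).congr (Eventually.of_forall fun ω => ?_)
  show Y t ω ^ 2 - 2 * (y + δ * t) * Y t ω + (y + δ * t) ^ 2 = _
  ring

/-- The second-moment bound from the quadratic variation. -/
lemma besq_second_moment (hδ : 0 < δ) (hy : 0 ≤ y) (hY : IsBESQ μ ℱ δ y Y)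
    {T : ℝ} (hT0 : 0 < T) :
    ∫ ω, (Y T ω - y - δ * T) ^ 2 ∂μ ≤ 4 * ((y + δ * T) * T) := by
  have hYsm : ∀ t, StronglyMeasurable (Y t) := fun t => ((hY.adapted t).mono (ℱ.le t) le_rfl).stronglyMeasurable
  have hintY : ∀ t, Integrable (Y t) μ := besq_integrable_Y hY
  have hEY : ∀ t, 0 ≤ t → ∫ ω, Y t ω ∂μ = y + δ * t := by
    intro t ht
    have h1 := hY.mart 0 t le_rfl ht
    have h2 := integral_condExp (μ := μ) (f := fun ω => Y t ω - y - δ * t) (ℱ.le 0)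
    rw [integral_congr_ae h1] at h2
    have h3 : ∫ ω, (Y 0 ω - y - δ * 0) ∂μ = 0 := by simp [hY.init]
    rw [h3] at h2
    have h4 : ∫ ω, (Y t ω - y - δ * t) ∂μ = (∫ ω, Y t ω ∂μ) - (y + δ * t) := by
      have : (fun ω => Y t ω - y - δ * t) = fun ω => Y t ω - (y + δ * t) :=
        funext fun ω => by ring
      rw [this, integral_sub (hintY t) (integrable_const _), integral_const]
      simp
    rw [h4] at h2
    linarith
  have hsm_uncurry : StronglyMeasurable (Function.uncurry Y) :=
    stronglyMeasurable_uncurry_of_continuous_of_stronglyMeasurable hY.cont hYsm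
  set g : Ω → ℝ := fun ω => ∫ u in Set.Ioc (0:ℝ) T, Y u ω with hgdef
  have hg_eq : ∀ ω, (∫ u in (0:ℝ)..T, Y u ω) = g ω := fun ω =>
    intervalIntegral.integral_of_le hT0.le
  have hgsm : StronglyMeasurable g := hsm_uncurry.integral_prod_left
  have hgnonneg : ∀ ω, 0 ≤ g ω := fun ω =>
    integral_nonneg fun u => hY.nonneg u ω
  have hof : ∀ ω, ENNReal.ofReal (g ω)
      = ∫⁻ u in Set.Ioc (0:ℝ) T, ENNReal.ofReal (Y u ω) ∂volume := fun ω =>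
    ofReal_integral_eq_lintegral_ofReal ((hY.cont ω).integrableOn_Ioc)
      (Eventually.of_forall fun u => hY.nonneg u ω)
  have hswap : ∫⁻ ω, ∫⁻ u in Set.Ioc (0:ℝ) T, ENNReal.ofReal (Y u ω) ∂volume ∂μ
      = ∫⁻ u in Set.Ioc (0:ℝ) T, ∫⁻ ω, ENNReal.ofReal (Y u ω) ∂μ := by
    refine lintegral_lintegral_swap ?_
    exact (ENNReal.measurable_ofReal.comp
      (hsm_uncurry.measurable.comp measurable_swap)).aemeasurable
  have hinner : ∀ u : ℝ, 0 ≤ u →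
      ∫⁻ ω, ENNReal.ofReal (Y u ω) ∂μ = ENNReal.ofReal (y + δ * u) := by
    intro u hu
    rw [← ofReal_integral_eq_lintegral_ofReal (hintY u) (Eventually.of_forall (hY.nonneg u)),
      hEY u hu]
  have hL : ∫⁻ ω, ENNReal.ofReal (g ω) ∂μ ≤ ENNReal.ofReal ((y + δ * T) * T) := by
    calc ∫⁻ ω, ENNReal.ofReal (g ω) ∂μ
        = ∫⁻ ω, ∫⁻ u in Set.Ioc (0:ℝ) T, ENNReal.ofReal (Y u ω) ∂volume ∂μ :=
          lintegral_congr hof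
      _ = ∫⁻ u in Set.Ioc (0:ℝ) T, ∫⁻ ω, ENNReal.ofReal (Y u ω) ∂μ := hswap
      _ = ∫⁻ u in Set.Ioc (0:ℝ) T, ENNReal.ofReal (y + δ * u) := by
          refine setLIntegral_congr_fun measurableSet_Ioc (fun u hu => ?_)
          exact hinner u hu.1.le
      _ ≤ ∫⁻ _u in Set.Ioc (0:ℝ) T, ENNReal.ofReal (y + δ * T) := by
          refine lintegral_mono_ae ((ae_restrict_iff' measurableSet_Ioc).2
            (Eventually.of_forall fun u hu => ?_))
          exact ENNReal.ofReal_le_ofReal (by nlinarith [hu.2, hδ.le])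
      _ = ENNReal.ofReal (y + δ * T) * volume (Set.Ioc (0:ℝ) T) := setLIntegral_const _ _
      _ = ENNReal.ofReal ((y + δ * T) * T) := by
          rw [Real.volume_Ioc, sub_zero, ← ENNReal.ofReal_mul (by positivity)]
  have hgint : Integrable g μ :=
    ⟨hgsm.aestronglyMeasurable,
      (hasFiniteIntegral_iff_ofReal (Eventually.of_forall hgnonneg)).2
        (lt_of_le_of_lt hL ENNReal.ofReal_lt_top)⟩
  have hEg : ∫ ω, g ω ∂μ ≤ (y + δ * T) * T := by
    rw [integral_eq_lintegral_of_nonneg_ae (Eventually.of_forall hgnonneg)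
      hgsm.aestronglyMeasurable]
    calc (∫⁻ ω, ENNReal.ofReal (g ω) ∂μ).toReal
        ≤ (ENNReal.ofReal ((y + δ * T) * T)).toReal :=
          ENNReal.toReal_mono ENNReal.ofReal_ne_top hL
      _ = (y + δ * T) * T := ENNReal.toReal_ofReal (by positivity)
  have hM2int : Integrable (fun ω => (Y T ω - y - δ * T) ^ 2) μ := besq_integrable_M_sq hY T
  have hEM2 : ∫ ω, (Y T ω - y - δ * T) ^ 2 ∂μ = 4 * ∫ ω, g ω ∂μ := by
    have h1 := hY.qv 0 T le_rfl hT0.le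
    have h2 := integral_condExp (μ := μ)
      (f := fun ω => (Y T ω - y - δ * T) ^ 2 - 4 * ∫ u in (0:ℝ)..T, Y u ω) (ℱ.le 0)
    rw [integral_congr_ae h1] at h2
    have h3 : ∫ ω, ((Y 0 ω - y - δ * 0) ^ 2 - 4 * ∫ u in (0:ℝ)..(0:ℝ), Y u ω) ∂μ = 0 := by
      simp [hY.init]
    rw [h3] at h2
    have h4 : (fun ω => (Y T ω - y - δ * T) ^ 2 - 4 * ∫ u in (0:ℝ)..T, Y u ω)
        = fun ω => (Y T ω - y - δ * T) ^ 2 - 4 * g ω := funext fun ω => by rw [hg_eq]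
    rw [h4, integral_sub hM2int (hgint.const_mul 4), integral_const_mul] at h2
    linarith
  rw [hEM2]
  linarith [hEg]

end Aux

/-- The event `{τ_{y/2} ≥ ε y}`: the process does not hit level `y/2` before time `ε y`. -/
theorem stmt_6 (δ : ℝ) (hδ : 0 < δ) :
    ∃ ε : ℝ, 0 < ε ∧
      ∀ (Ω : Type) (m : MeasurableSpace Ω) (μ : Measure Ω), IsProbabilityMeasure μ →
      ∀ (ℱ : Filtration ℝ m) (y : ℝ), 0 ≤ y → ∀ Y : ℝ → Ω → ℝ,
        IsBESQ μ ℱ δ y Y →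
        (1 : ℝ) / 2 ≤ (μ {ω | ∀ t : ℝ, 0 ≤ t → t < ε * y → Y t ω ≠ y / 2}).toReal := by
  classical
  set ε : ℝ := min (1/1000) (1/(1000 * δ)) with hεdef
  have hε0 : 0 < ε := lt_min (by norm_num) (by positivity)
  have hε1 : ε ≤ 1/1000 := min_le_left _ _
  have hεδ : δ * ε ≤ 1/1000 := by
    calc δ * ε ≤ δ * (1/(1000 * δ)) := by
          exact mul_le_mul_of_nonneg_left (min_le_right _ _) hδ.le
      _ = 1/1000 := by
          field_simp
  refine ⟨ε, hε0, ?_⟩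
  intro Ω m μ hμ ℱ y hy Y hY
  rcases eq_or_lt_of_le hy with hy0 | hy0
  · -- y = 0 : the event is everything
    have huniv : {ω | ∀ t : ℝ, 0 ≤ t → t < ε * y → Y t ω ≠ y / 2} = Set.univ := by
      ext ω
      simp only [Set.mem_setOf_eq, Set.mem_univ, iff_true]
      intro t ht0 htlt
      exfalso
      rw [← hy0] at htlt
      simp only [mul_zero] at htlt
      linarith
    rw [huniv, measure_univ, ENNReal.toReal_one]
    norm_num
  -- y > 0
  set T : ℝ := ε * y with hTdef
  have hT0 : 0 < T := mul_pos hε0 hy0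
  set M : ℝ → Ω → ℝ := fun t ω => Y t ω - y - δ * t with hMdef
  have hMadapt : ∀ t, StronglyMeasurable[ℱ t] (M t) := fun t =>
    (((hY.adapted t).sub measurable_const).sub measurable_const).stronglyMeasurable
  have hMmeas : ∀ t, Measurable (M t) := fun t =>
    (((hY.adapted t).mono (ℱ.le t) le_rfl)).sub measurable_const |>.sub measurable_const
  have hMmart : ∀ s t : ℝ, 0 ≤ s → s ≤ t → (μ[M t | ℱ s]) =ᵐ[μ] M s := fun s t hs hst =>
    hY.mart s t hs hst
  have hMint : ∀ t, Integrable (M t) μ := fun t => besq_integrable_M hY t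
  have hM2int : Integrable (fun ω => (M T ω) ^ 2) μ := besq_integrable_M_sq hY T
  -- key moment bound
  have hEM2 : ∫ ω, (M T ω) ^ 2 ∂μ ≤ 4 * ((y + δ * T) * T) := besq_second_moment hδ hy hY hT0
  have hEM2' : ∫ ω, (M T ω) ^ 2 ∂μ ≤ y ^ 2 / 100 := by
    refine le_trans hEM2 ?_
    have h1 : (y + δ * T) * T = ε * y^2 * (1 + δ * ε) := by
      rw [hTdef]; ring
    rw [h1]
    nlinarith [sq_nonneg y, mul_pos hy0 hy0, hε1, hεδ, hε0.le,
      mul_le_mul_of_nonneg_left hεδ (mul_nonneg hε0.le (sq_nonneg y)),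
      mul_le_mul_of_nonneg_right hε1 (sq_nonneg y)]
  -- first moment bound by AM-GM
  set I : ℝ := ∫ ω, |M T ω| ∂μ with hIdef
  have hI : I ≤ y / 6 := by
    have hptw : ∀ ω, y * |M T ω| ≤ 15 * (M T ω) ^ 2 + y ^ 2 / 60 := by
      intro ω
      generalize M T ω = x
      nlinarith [sq_nonneg (30 * |x| - y), sq_abs x]
    have hmono := integral_mono (((hMint T).abs).const_mul y)
      (((hM2int).const_mul 15).add (integrable_const (y ^ 2 / 60))) hptw
    rw [integral_const_mul] at hmono
    simp only [Pi.add_apply] at hmono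
    have hRHS : ∫ a, (15 * M T a ^ 2 + y ^ 2 / 60) ∂μ
        = 15 * (∫ ω, M T ω ^ 2 ∂μ) + y ^ 2 / 60 := by
      rw [integral_add ((hM2int).const_mul 15) (integrable_const _), integral_const_mul,
        integral_const]
      simp
    rw [hRHS] at hmono
    have : y * I ≤ y * (y / 6) := by
      calc y * I ≤ 15 * ∫ ω, (M T ω) ^ 2 ∂μ + y ^ 2 / 60 := hmono
        _ ≤ 15 * (y ^ 2 / 100) + y ^ 2 / 60 := by linarith
        _ = y * (y / 6) := by ring
    exact le_of_mul_le_mul_left this hy0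
  -- the bad event
  set e : ℕ ≃ ℚ := (Denumerable.eqv ℚ).symm with hedef
  set v : ℕ → ℝ := fun k => if ((e k : ℚ) : ℝ) ∈ Set.Icc (0:ℝ) T then ((e k : ℚ) : ℝ) else T
    with hvdef
  have hv_mem : ∀ k, v k ∈ Set.Icc (0:ℝ) T := by
    intro k
    simp only [hvdef]
    split_ifs with h
    · exact h
    · exact ⟨hT0.le, le_rfl⟩
  have hv_rat : ∀ q : ℚ, ((q : ℝ)) ∈ Set.Icc (0:ℝ) T → ∃ k, v k = (q : ℝ) := by
    intro q hq
    refine ⟨e.symm q, ?_⟩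
    simp only [hvdef, Equiv.apply_symm_apply]
    rw [if_pos hq]
  set c : NNReal := Real.toNNReal (y / 3) with hcdef
  have hc : (c : ℝ) = y / 3 := Real.coe_toNNReal _ (by positivity)
  set B : Set Ω := ⋃ k : ℕ, {ω | (c : ℝ) ≤ |M (v k) ω|} with hBdef
  have hBmeas : MeasurableSet B :=
    MeasurableSet.iUnion fun k => measurableSet_le measurable_const (hMmeas (v k)).abs
  -- bound on the measure of the bad event
  have hμB : μ B ≤ ENNReal.ofReal (1/2) := by
    set S : ℕ → Finset ℝ := fun n => (Finset.range (n+1)).image v with hSdef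
    have hSmono : Monotone S := fun a b hab =>
      Finset.image_subset_image (Finset.range_subset_range.2 (by omega))
    set Bn : ℕ → Set Ω := fun n => {ω | ∃ t ∈ S n, (c : ℝ) ≤ |M t ω|} with hBndef
    have hBnmono : Monotone Bn := by
      intro a b hab ω
      rintro ⟨t, ht, hct⟩
      exact ⟨t, hSmono hab ht, hct⟩
    have hBU : B = ⋃ n, Bn n := by
      ext ω
      simp only [hBdef, Set.mem_iUnion, Set.mem_setOf_eq, hBndef]
      constructor
      · rintro ⟨k, hk⟩
        exact ⟨k, v k, Finset.mem_image_of_mem v (Finset.mem_range.2 (Nat.lt_succ_self k)), hk⟩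
      · rintro ⟨n, t, htS, hct⟩
        obtain ⟨k, _, rfl⟩ := Finset.mem_image.1 htS
        exact ⟨k, hct⟩
    have hdoob : ∀ n, (c : ENNReal) * μ (Bn n) ≤ ENNReal.ofReal I := by
      intro n
      refine doob_finset hMadapt hMmart hT0.le (hMint T) (S n) ?_ c
      intro t ht
      obtain ⟨k, _, rfl⟩ := Finset.mem_image.1 ht
      exact hv_mem k
    have hμBsup : μ B = ⨆ n, μ (Bn n) := by
      rw [hBU]
      exact (hBnmono.directed_le).measure_iUnion
    have hkey : (c : ENNReal) * μ B ≤ ENNReal.ofReal I := by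
      rw [hμBsup, ENNReal.mul_iSup]
      exact iSup_le hdoob
    have hc0 : (c : ENNReal) ≠ 0 := by
      simp only [ne_eq, ENNReal.coe_eq_zero]
      rw [hcdef]
      simp only [ne_eq, Real.toNNReal_eq_zero, not_le]
      positivity
    have hIle : ENNReal.ofReal I ≤ (c : ENNReal) * ENNReal.ofReal (1/2) := by
      have h1 : (c : ENNReal) = ENNReal.ofReal (y / 3) := by
        rw [hcdef]; rfl
      rw [h1, ← ENNReal.ofReal_mul (by positivity)]
      exact ENNReal.ofReal_le_ofReal (by linarith)
    have := le_trans hkey hIle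
    exact (ENNReal.mul_le_mul_iff_right hc0 ENNReal.coe_ne_top).1 this
  -- the good event contains the complement of B
  have hsubset : Bᶜ ⊆ {ω | ∀ t : ℝ, 0 ≤ t → t < ε * y → Y t ω ≠ y / 2} := by
    intro ω hω
    simp only [Set.mem_setOf_eq]
    intro t ht0 htT heq
    apply hω
    have ht0' : 0 < t := by
      rcases eq_or_lt_of_le ht0 with h | h
      · exfalso
        rw [← h] at heq
        rw [hY.init ω] at heq
        linarith
      · exact h
    have hMt : M t ω < -(y/3) := by
      simp only [hMdef]
      rw [heq]
      nlinarith [mul_nonneg hδ.le ht0]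
    have hMc : Continuous fun s => M s ω := by
      simp only [hMdef]
      have h1 := hY.cont ω
      fun_prop
    have hUopen : IsOpen {s : ℝ | M s ω < -(y/3)} := isOpen_lt hMc continuous_const
    obtain ⟨h, hpos, hball⟩ := Metric.isOpen_iff.1 hUopen t hMt
    have hlt : max (t - h) 0 < t := max_lt (by linarith) ht0'
    obtain ⟨q, hq1, hq2⟩ := exists_rat_btwn hlt
    have hq0 : (0:ℝ) < q := lt_of_le_of_lt (le_max_right _ _) hq1
    have hqT : (q : ℝ) < T := lt_trans hq2 htT
    have hqU : (q : ℝ) ∈ {s : ℝ | M s ω < -(y/3)} := by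
      apply hball
      rw [Metric.mem_ball, Real.dist_eq, abs_lt]
      constructor
      · have := lt_of_le_of_lt (le_max_left (t - h) 0) hq1
        linarith
      · linarith
    obtain ⟨k, hk⟩ := hv_rat q ⟨hq0.le, hqT.le⟩
    refine Set.mem_iUnion.2 ⟨k, ?_⟩
    simp only [Set.mem_setOf_eq, hk, hc]
    have : M (q:ℝ) ω < -(y/3) := hqU
    calc y / 3 ≤ -(M (q:ℝ) ω) := by linarith
      _ ≤ |M (q:ℝ) ω| := neg_le_abs _
  -- conclude
  have h1 : μ Bᶜ ≤ μ {ω | ∀ t : ℝ, 0 ≤ t → t < ε * y → Y t ω ≠ y / 2} := measure_mono hsubset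
  have h2 : μ Bᶜ = 1 - μ B := prob_compl_eq_one_sub hBmeas
  have hBle : (μ B).toReal ≤ 1/2 := by
    refine ENNReal.toReal_le_of_le_ofReal (by norm_num) hμB
  have hcompl : (1:ℝ)/2 ≤ (μ Bᶜ).toReal := by
    rw [h2, ENNReal.toReal_sub_of_le prob_le_one ENNReal.one_ne_top, ENNReal.toReal_one]
    linarith
  refine le_trans hcompl (ENNReal.toReal_mono (measure_ne_top μ _) h1)
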